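/- arXiv:2404.03757 — 6 statements merged into one kernel-verified Lean document; each statement's English description precedes it below -/
import Mathlib

section
/- Let G and H be groups, let n ≥ 1, and let α : G → H be a surjective group homomorphism. Then the map Ψ : G^n_H → (ker α)^{n-1} ⋊_φ G defined by Ψ(g_1, …, g_n) = (g_1 g_n^{-1}, …, g_{n-1} g_n^{-1}, g_n) is a group isomorphism, where φ : G → Aut((ker α)^{n-1}) is the action by coordinatewise conjugation, φ(g)(x_1, …, x_{n-1}) = (g x_1 g^{-1}, …, g x_{n-1} g^{-1}). -/
/-- The `n`-fold fibre product `G^n_H` of a homomorphism `α : G →* H`,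
as a subgroup of `Gⁿ`: all tuples whose coordinates have equal images under `α`. -/
def fiberProd {G H : Type*} [Group G] [Group H] (α : G →* H) (n : ℕ) :
    Subgroup (Fin n → G) where
  carrier := {g | ∀ i j, α (g i) = α (g j)}
  one_mem' := fun _ _ => rfl
  mul_mem' := by
    intro a b ha hb i j
    simp only [Pi.mul_apply, map_mul, ha i j, hb i j]
  inv_mem' := by
    intro a ha i j
    simp only [Pi.inv_apply, map_inv, ha i j]

/-- Coordinatewise action of an automorphism on a finite power. -/
def piAut {ι : Type*} {M : Type*} [Monoid M] : MulAut M →* MulAut (ι → M) where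
  toFun e := MulEquiv.piCongrRight fun _ => e
  map_one' := by ext x; rfl
  map_mul' := by intros; ext x; rfl

/-- The action `φ : G →* Aut((ker α)^{n-1})` by coordinatewise conjugation. -/
def kerAct {G H : Type*} [Group G] [Group H] (α : G →* H) (m : ℕ) :
    G →* MulAut (Fin m → α.ker) :=
  piAut.comp MulAut.conjNormal

/-!
A tuple `(g_1, …, g_n)` in the fibre product is determined by its last coordinate `g_n` and the
quotients `g_i g_n⁻¹`, which lie in `ker α` because `α (g_i) = α (g_n)`. Conversely any
`(k_1, …, k_{n-1}) ∈ (ker α)^{n-1}` and `g ∈ G` give the tuple `(k_1 g, …, k_{n-1} g, g)`.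
The multiplication matches the semidirect product law because
`g_i h_i (g_n h_n)⁻¹ = (g_i g_n⁻¹) · g_n (h_i h_n⁻¹) g_n⁻¹`.
-/

@[simp]
lemma coe_kerAct_apply {G H : Type*} [Group G] [Group H] (α : G →* H) {m : ℕ} (g : G)
    (k : Fin m → α.ker) (i : Fin m) : ((kerAct α m g k i : α.ker) : G) = g * k i * g⁻¹ :=
  rfl

namespace fiberProd

variable {G H : Type*} [Group G] [Group H] (α : G →* H)

lemma mul_inv_mem_ker {n : ℕ} (g : fiberProd α n) (i j : Fin n) :
    g.1 i * (g.1 j)⁻¹ ∈ α.ker := by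
  rw [MonoidHom.mem_ker, map_mul, map_inv, g.2 i j, mul_inv_cancel]

lemma snoc_mul_mem {m : ℕ} (k : Fin m → α.ker) (g : G) :
    (Fin.snoc (fun i => (k i : G) * g) g : Fin (m + 1) → G) ∈ fiberProd α (m + 1) := by
  have image_eq : ∀ j, α (Fin.snoc (α := fun _ => G) (fun i => k i * g) g j) = α g := by
    refine Fin.lastCases ?_ fun i => ?_
    · rw [Fin.snoc_last]
    · rw [Fin.snoc_castSucc, map_mul, (k i).2, one_mul]
  exact fun i j => (image_eq i).trans (image_eq j).symm

def toSemidirectProduct (m : ℕ) :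
    fiberProd α (m + 1) →* (Fin m → α.ker) ⋊[kerAct α m] G where
  toFun g := ⟨fun i => ⟨g.1 i.castSucc * (g.1 (Fin.last m))⁻¹, mul_inv_mem_ker α g _ _⟩,
    g.1 (Fin.last m)⟩
  map_one' := SemidirectProduct.ext (funext fun _ => Subtype.ext (by simp)) rfl
  map_mul' g h := by
    refine SemidirectProduct.ext (funext fun i => Subtype.ext ?_) rfl
    simp only [SemidirectProduct.mul_left, Pi.mul_apply, Subgroup.coe_mul, coe_kerAct_apply]
    group

def equivSemidirectProduct (m : ℕ) :
    fiberProd α (m + 1) ≃* (Fin m → α.ker) ⋊[kerAct α m] G where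
  __ := toSemidirectProduct α m
  invFun x :=
    ⟨Fin.snoc (fun i => (x.left i : G) * x.right) x.right, snoc_mul_mem α x.left x.right⟩
  left_inv g := Subtype.ext <| by
    change Fin.snoc (fun i => g.1 i.castSucc * (g.1 (Fin.last m))⁻¹ * g.1 (Fin.last m))
      (g.1 (Fin.last m)) = g.1
    simp only [inv_mul_cancel_right]
    exact Fin.snoc_init_self g.1
  right_inv x := by
    refine SemidirectProduct.ext (funext fun i => Subtype.ext ?_) ?_ <;>
      simp [toSemidirectProduct]

end fiberProd

/-- For a surjective group homomorphism `α : G → H` and `n ≥ 1`,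
the map `Ψ : G^n_H → (ker α)^{n-1} ⋊_φ G`,
`Ψ(g_1, …, g_n) = (g_1 g_n⁻¹, …, g_{n-1} g_n⁻¹, g_n)`, is a group isomorphism,
where `φ` is the coordinatewise conjugation action. -/
theorem stmt_1 {G H : Type*} [Group G] [Group H] (n : ℕ) (hn : 1 ≤ n)
    (α : G →* H) :
    ∃ e : fiberProd α n ≃* (Fin (n - 1) → α.ker) ⋊[kerAct α (n - 1)] G,
      ∀ x : fiberProd α n,
        (e x).right = x.1 ⟨n - 1, by omega⟩ ∧
        ∀ i : Fin (n - 1),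
          ((e x).left i : G) = x.1 (Fin.castLE (by omega) i) * (x.1 ⟨n - 1, by omega⟩)⁻¹ := by
  obtain ⟨m, rfl⟩ : ∃ m, n = m + 1 := ⟨n - 1, by omega⟩
  exact ⟨fiberProd.equivSemidirectProduct α m, fun _ => ⟨rfl, fun _ => rfl⟩⟩
end

section
/- Let G and H be groups, let n ≥ 1, and let α : G → H be a surjective group homomorphism. Suppose N is a normal subgroup of G such that the commutator subgroup ⁅N, ker α⁆ is trivial (i.e., every element of N commutes with every element of ker α). Then Δ_n(N) = {(a, …, a) : a ∈ N} is a normal subgroup of G^n_H. -/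
/-- The diagonal homomorphism `Δ_n : G →* Gⁿ`. -/
def diagHom (G : Type*) [Group G] (n : ℕ) : G →* (Fin n → G) where
  toFun g := fun _ => g
  map_one' := rfl
  map_mul' _ _ := rfl

/-!
Two elements `x, y` of the same fibre of `α` differ by `x * y⁻¹ ∈ ker α`, and conjugation by an
element of `ker α` fixes `N` pointwise; since `N` is normal, `x a x⁻¹ = (x y⁻¹) (y a y⁻¹) (x y⁻¹)⁻¹`
is therefore `y a y⁻¹` for `a ∈ N`. Hence conjugating `Δ_n(a)` by `g ∈ G^n_H` conjugates every
coordinate by the same element, giving `Δ_n(g₀ a g₀⁻¹) ∈ Δ_n(N)`.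
-/

section

variable {G H : Type*} [Group G] [Group H] {α : G →* H} {N : Subgroup G}

theorem conj_eq_conj_of_map_eq (hN : N.Normal) (hcomm : ∀ a ∈ N, ∀ k ∈ α.ker, a * k = k * a)
    {x y a : G} (hxy : α x = α y) (ha : a ∈ N) : x * a * x⁻¹ = y * a * y⁻¹ := by
  have hker : x * y⁻¹ ∈ α.ker := by
    rw [MonoidHom.mem_ker, map_mul, map_inv, hxy, mul_inv_cancel]
  have hfix : Commute (x * y⁻¹) (y * a * y⁻¹) :=
    (hcomm _ (hN.conj_mem a ha y) _ hker).symm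
  calc x * a * x⁻¹ = x * y⁻¹ * (y * a * y⁻¹) * (x * y⁻¹)⁻¹ := by group
    _ = y * a * y⁻¹ := hfix.mul_inv_cancel

theorem conj_diagHom_of_mem_fiberProd (hN : N.Normal)
    (hcomm : ∀ a ∈ N, ∀ k ∈ α.ker, a * k = k * a) {n : ℕ} {g : Fin n → G}
    (hg : g ∈ fiberProd α n) (i₀ : Fin n) {a : G} (ha : a ∈ N) :
    g * diagHom G n a * g⁻¹ = diagHom G n (g i₀ * a * (g i₀)⁻¹) :=
  funext fun i => conj_eq_conj_of_map_eq hN hcomm (hg i i₀) ha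

end

theorem stmt_3_general {G H : Type*} [Group G] [Group H] (n : ℕ) (hn : 1 ≤ n)
    (α : G →* H)
    (N : Subgroup G) (hN : N.Normal)
    (hcomm : ∀ a ∈ N, ∀ k ∈ α.ker, a * k = k * a) :
    ∀ g ∈ fiberProd α n, ∀ x ∈ N.map (diagHom G n), g * x * g⁻¹ ∈ N.map (diagHom G n) := by
  rintro g hg _ ⟨a, ha, rfl⟩
  rw [conj_diagHom_of_mem_fiberProd hN hcomm hg ⟨0, hn⟩ ha]
  exact Subgroup.mem_map_of_mem _ (hN.conj_mem a ha _)

/-- Let `α : G → H` be a surjective group homomorphism, `n ≥ 1`, and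
let `N` be a normal subgroup of `G` such that `⁅N, ker α⁆ = 1` (every element of `N`
commutes with every element of `ker α`). Then `Δ_n(N)` is a normal subgroup of the
fibre product `G^n_H`. -/
theorem stmt_3 {G H : Type*} [Group G] [Group H] (n : ℕ) (hn : 1 ≤ n)
    (α : G →* H) (hα : Function.Surjective α)
    (N : Subgroup G) (hN : N.Normal)
    (hcomm : ∀ a ∈ N, ∀ k ∈ α.ker, a * k = k * a) :
    ∀ g ∈ fiberProd α n, ∀ x ∈ N.map (diagHom G n), g * x * g⁻¹ ∈ N.map (diagHom G n) :=
  stmt_3_general n hn α N hN hcomm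
end

section
/- Let G and H be groups, let n ≥ 2, let α : G → H be a surjective group homomorphism, and let k_1, …, k_{n-1} ∈ ker α. Set b = (k_1, …, k_{n-1}, 1) ∈ G^n_H. Then Δ_n(G) ∩ b Δ_n(G) b^{-1} = Δ_n(⋂_{i=1}^{n-1} C_G(k_i)), where C_G(k_i) denotes the centralizer of k_i in G; equivalently, for g ∈ G, the diagonal element Δ_n(g) lies in b Δ_n(G) b^{-1} if and only if g commutes with each k_i. -/
lemma Fin.forall_iff_castLE_and_last {n : ℕ} (hn : 1 ≤ n) {p : Fin n → Prop} :
    (∀ j, p j) ↔ (∀ i : Fin (n - 1), p (Fin.castLE (Nat.sub_le n 1) i)) ∧ p ⟨n - 1, by omega⟩ := by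
  refine ⟨fun h => ⟨fun i => h _, h _⟩, fun ⟨hinit, hlast⟩ j => ?_⟩
  rcases Nat.lt_or_ge j (n - 1) with hj | hj
  · exact hinit ⟨j, hj⟩
  · rwa [show j = ⟨n - 1, by omega⟩ from Fin.ext (by simp only; omega)]

section

variable {G : Type*} [Group G] {n : ℕ}

@[simp]
lemma diagHom_apply (g : G) (i : Fin n) : diagHom G n g i = g := rfl

lemma exists_diagHom_eq_conj_iff {b : Fin n → G} {i₀ : Fin n} (hb : b i₀ = 1) (g : G) :
    (∃ x : G, diagHom G n g = b * diagHom G n x * b⁻¹) ↔ ∀ i, Commute g (b i) := by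
  have conj_apply : ∀ x i, (b * diagHom G n x * b⁻¹) i = b i * x * (b i)⁻¹ := fun _ _ => rfl
  constructor
  · rintro ⟨x, hx⟩ i
    have hxg : g = x := by simpa [conj_apply, hb] using congrFun hx i₀
    subst hxg
    exact eq_mul_inv_iff_mul_eq.mp (by simpa [conj_apply] using congrFun hx i)
  · exact fun h => ⟨g, funext fun i => eq_mul_inv_iff_mul_eq.mpr (h i).eq⟩

lemma range_diagHom_inf_map_conj {b : Fin n → G} {i₀ : Fin n} (hb : b i₀ = 1) :
    (diagHom G n).range ⊓ Subgroup.map (MulAut.conj b).toMonoidHom (diagHom G n).range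
      = Subgroup.map (diagHom G n) (⨅ i, Subgroup.centralizer {b i}) := by
  ext y
  simp only [Subgroup.mem_inf, MonoidHom.mem_range, Subgroup.mem_map, MulEquiv.coe_toMonoidHom,
    MulAut.conj_apply, Subgroup.mem_iInf, Subgroup.mem_centralizer_singleton_iff,
    exists_exists_eq_and]
  constructor
  · rintro ⟨⟨g, rfl⟩, x, hx⟩
    exact ⟨g, (exists_diagHom_eq_conj_iff hb g).mp ⟨x, hx.symm⟩, rfl⟩
  · rintro ⟨g, hg, rfl⟩
    obtain ⟨x, hx⟩ := (exists_diagHom_eq_conj_iff hb g).mpr hg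
    exact ⟨⟨g, rfl⟩, x, hx.symm⟩

end

theorem stmt_4 {G : Type*} [Group G] (n : ℕ) (hn : 2 ≤ n)
    (k : Fin (n - 1) → G)
    (b : Fin n → G)
    (hb : ∀ i : Fin (n - 1), b (Fin.castLE (by omega) i) = k i)
    (hblast : b ⟨n - 1, by omega⟩ = 1) :
    ((diagHom G n).range ⊓ Subgroup.map (MulAut.conj b).toMonoidHom (diagHom G n).range
        = Subgroup.map (diagHom G n) (⨅ i : Fin (n - 1), Subgroup.centralizer {k i}))
    ∧ ∀ g : G, (∃ x : G, diagHom G n g = b * diagHom G n x * b⁻¹)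
        ↔ ∀ i : Fin (n - 1), g * k i = k i * g := by
  have commute_b_iff (g : G) : (∀ j, Commute g (b j)) ↔ ∀ i, g * k i = k i * g := by
    rw [Fin.forall_iff_castLE_and_last (by omega : 1 ≤ n), hblast]
    simp only [hb, Commute.one_right, and_true]
    rfl
  have centralizer_b : ⨅ j, Subgroup.centralizer {b j} = ⨅ i, Subgroup.centralizer {k i} := by
    ext g
    simp only [Subgroup.mem_iInf, Subgroup.mem_centralizer_singleton_iff]
    exact commute_b_iff g
  exact ⟨by rw [range_diagHom_inf_map_conj hblast, centralizer_b],
    fun g => (exists_diagHom_eq_conj_iff hblast g).trans (commute_b_iff g)⟩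
end

section
/- Let G and H be groups, let n ≥ 1, and let α : G → H be a surjective group homomorphism. Let A_1, …, A_n be subgroups of G such that ⋂_{i=1}^n g_i A_i g_i^{-1} = {1} for every tuple (g_1, …, g_n) ∈ G^n_H. Let L = G^n_H ∩ (A_1 × ⋯ × A_n). Then for every subgroup N of G^n for which there exists g ∈ G^n_H with g N g^{-1} = Δ_n(G), one has L ∩ N = {1}. -/
/-!
If `g N g⁻¹ = Δ_n(G)`, every `x ∈ N` has the form `x i = gᵢ⁻¹ y gᵢ` for one `y ∈ G`. If moreover
`x ∈ A_1 × ⋯ × A_n`, then `y ∈ ⋂ᵢ gᵢ Aᵢ gᵢ⁻¹ = {1}`, so `x = 1`.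
-/

section

variable {G : Type*} [Group G] {n : ℕ}

theorem exists_eq_conj_of_mem_of_map_conj_eq_diagHom_range {N : Subgroup (Fin n → G)}
    {g : Fin n → G} (hN : N.map (MulAut.conj g).toMonoidHom = (diagHom G n).range)
    {x : Fin n → G} (hx : x ∈ N) : ∃ y : G, ∀ i, x i = (g i)⁻¹ * y * g i := by
  have hgx : g * x * g⁻¹ ∈ (diagHom G n).range := hN ▸ ⟨x, hx, rfl⟩
  obtain ⟨y, hy⟩ := hgx
  refine ⟨y, fun i => ?_⟩
  have hyi : g i * x i * (g i)⁻¹ = y := (congrFun hy i).symm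
  rw [← hyi]
  group

theorem pi_inf_eq_bot_of_map_conj_eq_diagHom_range (A : Fin n → Subgroup G) {g : Fin n → G}
    (hA : ∀ y : G, (∀ i, (g i)⁻¹ * y * g i ∈ A i) → y = 1) {N : Subgroup (Fin n → G)}
    (hN : N.map (MulAut.conj g).toMonoidHom = (diagHom G n).range) :
    Subgroup.pi Set.univ A ⊓ N = ⊥ := by
  rw [eq_bot_iff]
  rintro x ⟨hxA, hxN⟩
  obtain ⟨y, hxy⟩ := exists_eq_conj_of_mem_of_map_conj_eq_diagHom_range hN hxN
  have hy : y = 1 := hA y fun i => hxy i ▸ hxA i (Set.mem_univ i)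
  exact Subgroup.mem_bot.mpr (funext fun i => by simp [hxy i, hy])

end

theorem stmt_5_general {G H : Type*} [Group G] [Group H] (n : ℕ)
    (α : G →* H)
    (A : Fin n → Subgroup G)
    (hA : ∀ g ∈ fiberProd α n, ∀ x : G, (∀ i, (g i)⁻¹ * x * g i ∈ A i) → x = 1) :
    ∀ N : Subgroup (Fin n → G),
      (∃ g ∈ fiberProd α n,
        Subgroup.map (MulAut.conj g).toMonoidHom N = (diagHom G n).range) →
      (fiberProd α n ⊓ Subgroup.pi Set.univ A) ⊓ N = ⊥ := by
  rintro N ⟨g, hg, hN⟩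
  refine eq_bot_iff.mpr (le_trans (inf_le_inf_right N inf_le_right) ?_)
  exact (pi_inf_eq_bot_of_map_conj_eq_diagHom_range A (hA g hg) hN).le

/-- Let `α : G → H` be a surjective group homomorphism, `n ≥ 1`, and
let `A_1, …, A_n ≤ G` with `⋂ᵢ gᵢ Aᵢ gᵢ⁻¹ = {1}` for every `(g_1, …, g_n) ∈ G^n_H`.
Set `L = G^n_H ∩ (A_1 × ⋯ × A_n)`. Then for every subgroup `N` of `Gⁿ` such that
`g N g⁻¹ = Δ_n(G)` for some `g ∈ G^n_H`, we have `L ∩ N = {1}`. -/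
theorem stmt_5 {G H : Type*} [Group G] [Group H] (n : ℕ) (hn : 1 ≤ n)
    (α : G →* H) (hα : Function.Surjective α)
    (A : Fin n → Subgroup G)
    (hA : ∀ g ∈ fiberProd α n, ∀ x : G, (∀ i, (g i)⁻¹ * x * g i ∈ A i) → x = 1) :
    ∀ N : Subgroup (Fin n → G),
      (∃ g ∈ fiberProd α n,
        Subgroup.map (MulAut.conj g).toMonoidHom N = (diagHom G n).range) →
      (fiberProd α n ⊓ Subgroup.pi Set.univ A) ⊓ N = ⊥ :=
  stmt_5_general n α A hA
end

section
/- Let p : E → B and f : B̃ → B be continuous maps, and let p̃ : Ẽ → B̃ be the pullback of p along f, where Ẽ = {(b̃, e) ∈ B̃ × E : f(b̃) = p(e)} and p̃(b̃, e) = b̃. Fix n ≥ 2 and r ≥ 0. If there exist open sets U_0, …, U_r covering E^n_B together with continuous maps s_i : U_i → E^I_B satisfying Π_n ∘ s_i = (inclusion of U_i into E^n_B) for each i, then there exist open sets V_0, …, V_r covering Ẽ^n_{B̃} together with continuous maps σ_i : V_i → Ẽ^I_{B̃} satisfying Π̃_n ∘ σ_i = (inclusion of V_i into Ẽ^n_{B̃})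 for each i. -/
/-- The space `E^n_B` of `n`-tuples of points of `E` lying in a common fibre of `p`. -/
abbrev EnB {E B : Type*} [TopologicalSpace E] [TopologicalSpace B] (p : E → B) (n : ℕ) :
    Type _ :=
  {x : Fin n → E // ∃ b : B, ∀ i, p (x i) = b}

/-- The space `E^I_B` of paths in `E` lying in a single fibre of `p`. -/
abbrev EIB {E B : Type*} [TopologicalSpace E] [TopologicalSpace B] (p : E → B) : Type _ :=
  {γ : C(unitInterval, E) // ∃ b : B, ∀ t, p (γ t) = b}

/-- The time point `(i : ℝ)/(n-1)` in the unit interval, for `i : Fin n`, `n ≥ 2`. -/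
noncomputable def timePt (n : ℕ) (hn : 2 ≤ n) (i : Fin n) : unitInterval :=
  ⟨(i : ℕ) / ((n : ℝ) - 1), by
    have h1 : (1 : ℝ) ≤ (n : ℝ) - 1 := by
      have : (2 : ℝ) ≤ (n : ℝ) := by exact_mod_cast hn
      linarith
    have h2 : ((i : ℕ) : ℝ) ≤ (n : ℝ) - 1 := by
      have := i.isLt
      have : ((i : ℕ) : ℝ) ≤ (n : ℝ) - 1 ↔ ((i : ℕ) : ℝ) + 1 ≤ (n : ℝ) := by constructor <;> intro <;> linarith
      rw [this]
      exact_mod_cast i.isLt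
    constructor
    · positivity
    · rw [div_le_one (by linarith)]
      exact h2⟩

/-- The parametrized endpoint map `Π_n : E^I_B → E^n_B`,
`Π_n(γ) = (γ(0), γ(1/(n-1)), …, γ(1))`. -/
noncomputable def Pin {E B : Type*} [TopologicalSpace E] [TopologicalSpace B]
    (p : E → B) (n : ℕ) (hn : 2 ≤ n) (γ : EIB p) : EnB p n :=
  ⟨fun i => γ.1 (timePt n hn i), by
    obtain ⟨b, hb⟩ := γ.2
    exact ⟨b, fun i => hb _⟩⟩

/-- `HasCover p n hn r` : there are open sets `U_0, …, U_r` covering `E^n_B`, each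
admitting a continuous section of the parametrized endpoint map `Π_n`. -/
def HasCover {E B : Type*} [TopologicalSpace E] [TopologicalSpace B]
    (p : E → B) (n : ℕ) (hn : 2 ≤ n) (r : ℕ) : Prop :=
  ∃ U : Fin (r + 1) → Set (EnB p n),
    (∀ i, IsOpen (U i)) ∧ (⋃ i, U i) = Set.univ ∧
      ∀ i, ∃ s : C(U i, EIB p), ∀ x : U i, Pin p n hn (s x) = (x : EnB p n)

/-!
A tuple `x` in `Ẽ^n_{B̃}` with common base point `b̃` maps to the tuple of its `E`-components
in `E^n_B`. If `γ` is a fibrewise path of `E` through that tuple at the times `i/(n-1)`, then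
`t ↦ (b̃, γ t)` is a fibrewise path of `Ẽ` through `x`, and it depends continuously on `(x, γ)`.
Hence every section of `Π_n` over an open `U ⊆ E^n_B` yields a section of `Π̃_n` over the
(open) preimage of `U`, and these preimages cover `Ẽ^n_{B̃}`.
-/

open Function

section

variable {E B E' B' : Type*} [TopologicalSpace E] [TopologicalSpace B]
  [TopologicalSpace E'] [TopologicalSpace B']

theorem EIB.fibre_eq {p : E → B} (γ : EIB p) (s t : unitInterval) : p (γ.1 s) = p (γ.1 t) := by
  obtain ⟨b, hb⟩ := γ.2
  rw [hb, hb]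

theorem EnB.fibre_eq {q : E' → B'} {n : ℕ} (x : EnB q n) (i j : Fin n) :
    q (x.1 i) = q (x.1 j) := by
  obtain ⟨b, hb⟩ := x.2
  rw [hb, hb]

@[fun_prop]
theorem EnB.continuous_val_apply {X : Type*} [TopologicalSpace X] {q : E' → B'} {n : ℕ}
    {g : X → EnB q n} (hg : Continuous g) (i : Fin n) : Continuous fun y => (g y).1 i :=
  (continuous_apply i).comp (continuous_subtype_val.comp hg)

abbrev PinPullback {p : E → B} {q : E' → B'} (n : ℕ) (hn : 2 ≤ n) (φ : EnB q n → EnB p n) :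
    Type _ :=
  {z : EnB q n × EIB p // Pin p n hn z.2 = φ z.1}

theorem HasCover.of_lift {p : E → B} {q : E' → B'} {n r : ℕ} {hn : 2 ≤ n}
    (h : HasCover p n hn r) (φ : C(EnB q n, EnB p n))
    (L : C(PinPullback n hn φ, EIB q))
    (hL : ∀ z, Pin q n hn (L z) = z.1.1) : HasCover q n hn r := by
  obtain ⟨U, hUopen, hUcover, hsection⟩ := h
  refine ⟨fun i => φ ⁻¹' U i, fun i => (hUopen i).preimage φ.continuous, ?_, fun i => ?_⟩
  · rw [← Set.preimage_iUnion, hUcover, Set.preimage_univ]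
  · obtain ⟨s, hs⟩ := hsection i
    let toU : C(φ ⁻¹' U i, U i) := ⟨fun x => ⟨φ x, x.2⟩, by fun_prop⟩
    exact ⟨L.comp ⟨fun x => ⟨(x.1, s (toU x)), hs _⟩, by fun_prop⟩, fun x => hL _⟩

section Pullback

variable (p : E → B) (f : B' → B) (n : ℕ)

def EnB.pullbackSnd : C(EnB (Pullback.fst : f.Pullback p → B') n, EnB p n) :=
  ⟨fun x => ⟨fun j => (x.1 j).snd,
    let ⟨b, hb⟩ := x.2; ⟨f b, fun j => (x.1 j).2.symm.trans (congrArg f (hb j))⟩⟩,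
    .subtype_mk (by unfold Pullback.snd; fun_prop) _⟩

def EIB.pullbackLift (hn : 2 ≤ n) :
    C(PinPullback n hn (EnB.pullbackSnd p f n), EIB (Pullback.fst : f.Pullback p → B')) :=
  let i₀ : Fin n := ⟨0, by omega⟩
  let F : C(_ × unitInterval, f.Pullback p) :=
    ⟨fun zt => ⟨((zt.1.1.1.1 i₀).fst, zt.1.1.2.1 zt.2), by
      obtain ⟨⟨⟨x, γ⟩, hγ⟩, t⟩ := zt
      calc f (x.1 i₀).fst = p (x.1 i₀).snd := (x.1 i₀).2
        _ = p (γ.1 (timePt n hn i₀)) := congrArg (fun y : EnB p n => p (y.1 i₀)) hγ.symm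
        _ = p (γ.1 t) := γ.fibre_eq _ _⟩,
      by refine .subtype_mk ?_ _; unfold Pullback.fst; fun_prop⟩
  ⟨fun z => ⟨F.curry z, (z.1.1.1 i₀).fst, fun _ => rfl⟩, .subtype_mk F.curry.continuous _⟩

theorem EIB.pin_pullbackLift (hn : 2 ≤ n) (z : PinPullback n hn (EnB.pullbackSnd p f n)) :
    Pin Pullback.fst n hn (EIB.pullbackLift p f n hn z) = z.1.1 := by
  obtain ⟨⟨x, γ⟩, hγ⟩ := z
  ext j : 2
  exact Subtype.ext <|
    Prod.ext (x.fibre_eq ⟨0, by omega⟩ j) (congrArg (fun y : EnB p n => y.1 j) hγ)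

end Pullback

theorem HasCover.pullback {p : E → B} {n r : ℕ} {hn : 2 ≤ n} (h : HasCover p n hn r)
    (f : B' → B) : HasCover (Pullback.fst : f.Pullback p → B') n hn r :=
  h.of_lift (EnB.pullbackSnd p f n) (EIB.pullbackLift p f n hn) (EIB.pin_pullbackLift p f n hn)

end

theorem stmt_9_general {E B Bt : Type*} [TopologicalSpace E] [TopologicalSpace B]
    [TopologicalSpace Bt] (p : E → B) (f : Bt → B)
    (n r : ℕ) (hn : 2 ≤ n)
    (hcov : HasCover p n hn r) :
    HasCover (fun q : {q : Bt × E // f q.1 = p q.2} => q.1.1) n hn r :=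
  hcov.pullback f

/-- Let `p : E → B` and `f : B̃ → B` be continuous, and let
`p̃ : Ẽ → B̃` be the pullback of `p` along `f`. Fix `n ≥ 2`, `r ≥ 0`. If `E^n_B` admits
an open cover by `r + 1` sets each with a continuous section of `Π_n`, then
`Ẽ^n_{B̃}` admits an open cover by `r + 1` sets each with a continuous section of `Π̃_n`.
(This is the open-cover content of `TC_n[p̃] ≤ TC_n[p]`.) -/
theorem stmt_9 {E B Bt : Type*} [TopologicalSpace E] [TopologicalSpace B]
    [TopologicalSpace Bt] (p : E → B) (hp : Continuous p) (f : Bt → B) (hf : Continuous f)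
    (n r : ℕ) (hn : 2 ≤ n)
    (hcov : HasCover p n hn r) :
    HasCover (fun q : {q : Bt × E // f q.1 = p q.2} => q.1.1) n hn r :=
  stmt_9_general p f n r hn hcov
end

section
/- Let p : E → B be a continuous map, let b ∈ B, and let F = p^{-1}(b) be the fibre over b, with subspace topology. Fix n ≥ 2 and r ≥ 0. If there exist open sets U_0, …, U_r covering E^n_B together with continuous maps s_i : U_i → E^I_B satisfying Π_n ∘ s_i = (inclusion of U_i into E^n_B) for each i, then there exist open sets V_0, …, V_r covering F^n together with continuous maps σ_i : V_i → C([0,1], F) such that for each i and each (x_1, …, x_n) ∈ V_i, the path γ = σ_i(x_1, …, x_n) satisfies γ((j-1)/(n-1)) = x_j for all j = 1, …, n. -/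
def ContinuousMap.familyCodRestrict {X Y Z : Type*} [TopologicalSpace X] [TopologicalSpace Y]
    [TopologicalSpace Z] {q : Z → Prop} (g : C(X, C(Y, Z))) (hg : ∀ x y, q (g x y)) :
    C(X, C(Y, Subtype q)) where
  toFun x := ⟨fun y => ⟨g x y, hg x y⟩, (g x).continuous.subtype_mk _⟩
  continuous_toFun :=
    (ContinuousMap.isInducing_postcomp ⟨Subtype.val, continuous_subtype_val⟩
      Topology.IsEmbedding.subtypeVal.isInducing).continuous_iff.mpr g.continuous

section FibrePaths

variable {E B : Type*} [TopologicalSpace E] [TopologicalSpace B] {p : E → B} {n : ℕ}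

def fibrePowToEnB (p : E → B) (b : B) (n : ℕ) : C(Fin n → {e : E // p e = b}, EnB p n) where
  toFun x := ⟨fun j => (x j).1, b, fun j => (x j).2⟩
  continuous_toFun := by fun_prop

theorem EIB.proj_apply_eq (γ : EIB p) (t t₀ : unitInterval) : p (γ.1 t) = p (γ.1 t₀) := by
  obtain ⟨b, hb⟩ := γ.2
  rw [hb t, hb t₀]

theorem Pin_apply_eq_of_eq {hn : 2 ≤ n} {γ : EIB p} {x : EnB p n} (h : Pin p n hn γ = x)
    (j : Fin n) : γ.1 (timePt n hn j) = x.1 j :=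
  congr_fun (congr_arg Subtype.val h) j

variable {b : B} {U : Set (EnB p n)}

def sectionPaths (s : C(U, EIB p)) : C(fibrePowToEnB p b n ⁻¹' U, C(unitInterval, E)) :=
  (⟨Subtype.val, continuous_subtype_val⟩ : C(EIB p, C(unitInterval, E))).comp
    (s.comp ((fibrePowToEnB p b n).restrictPreimage U))

/-- The path passes through `x 0 ∈ F` and stays in one fibre, hence in `F`. -/
theorem proj_sectionPaths_apply (hn : 2 ≤ n) (s : C(U, EIB p))
    (hs : ∀ x : U, Pin p n hn (s x) = x) (x : fibrePowToEnB p b n ⁻¹' U) (t : unitInterval) :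
    p (sectionPaths s x t) = b := by
  let j₀ : Fin n := ⟨0, by omega⟩
  calc p (sectionPaths s x t) = p (sectionPaths s x (timePt n hn j₀)) := EIB.proj_apply_eq _ _ _
    _ = p (x.1 j₀).1 := congr_arg p (Pin_apply_eq_of_eq (hs _) j₀)
    _ = b := (x.1 j₀).2

def fibreSection (hn : 2 ≤ n) (s : C(U, EIB p)) (hs : ∀ x : U, Pin p n hn (s x) = x) :
    C(fibrePowToEnB p b n ⁻¹' U, C(unitInterval, {e : E // p e = b})) :=
  (sectionPaths s).familyCodRestrict (proj_sectionPaths_apply hn s hs)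

theorem fibreSection_apply_timePt (hn : 2 ≤ n) (s : C(U, EIB p))
    (hs : ∀ x : U, Pin p n hn (s x) = x) (x : fibrePowToEnB p b n ⁻¹' U) (j : Fin n) :
    fibreSection hn s hs x (timePt n hn j) = x.1 j :=
  Subtype.ext (Pin_apply_eq_of_eq (hs _) j)

end FibrePaths

theorem stmt_10_general {E B : Type*} [TopologicalSpace E] [TopologicalSpace B]
    (p : E → B) (b : B) (n r : ℕ) (hn : 2 ≤ n)
    (hcov : HasCover p n hn r) :
    ∃ V : Fin (r + 1) → Set (Fin n → {e : E // p e = b}),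
      (∀ i, IsOpen (V i)) ∧ (⋃ i, V i) = Set.univ ∧
        ∀ i, ∃ σ : C(V i, C(unitInterval, {e : E // p e = b})),
          ∀ x : V i, ∀ j : Fin n,
            (σ x) (timePt n hn j) = (x : Fin n → {e : E // p e = b}) j := by
  obtain ⟨U, hU_open, hU_cover, hU_section⟩ := hcov
  refine ⟨fun i => fibrePowToEnB p b n ⁻¹' U i, fun i => (hU_open i).preimage (map_continuous _),
    by rw [← Set.preimage_iUnion, hU_cover, Set.preimage_univ], fun i => ?_⟩
  obtain ⟨s, hs⟩ := hU_section i
  exact ⟨fibreSection hn s hs, fibreSection_apply_timePt hn s hs⟩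

/-- Let `p : E → B` be continuous, `b ∈ B`, and `F = p⁻¹(b)` the fibre
over `b`. Fix `n ≥ 2`, `r ≥ 0`. If `E^n_B` admits an open cover by `r + 1` sets each
with a continuous section of `Π_n`, then `Fⁿ` admits an open cover by `r + 1` open sets
`V_i`, each with a continuous map `σ_i : V_i → C(I, F)` such that the path
`γ = σ_i(x_1, …, x_n)` satisfies `γ((j-1)/(n-1)) = x_j` for all `j`.
(This is the open-cover content of `TC_n(F) ≤ TC_n[p]`.) -/
theorem stmt_10 {E B : Type*} [TopologicalSpace E] [TopologicalSpace B]
    (p : E → B) (hp : Continuous p) (b : B) (n r : ℕ) (hn : 2 ≤ n)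
    (hcov : HasCover p n hn r) :
    ∃ V : Fin (r + 1) → Set (Fin n → {e : E // p e = b}),
      (∀ i, IsOpen (V i)) ∧ (⋃ i, V i) = Set.univ ∧
        ∀ i, ∃ σ : C(V i, C(unitInterval, {e : E // p e = b})),
          ∀ x : V i, ∀ j : Fin n,
            (σ x) (timePt n hn j) = (x : Fin n → {e : E // p e = b}) j :=
  stmt_10_general p b n r hn hcov
end
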